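/- Let k be a field and n ≥ 2. Consider the space of families of k-linear maps η_V : Sym^2(V) → Λ^2(V), one for each finite-dimensional k-vector space V, natural with respect to all k-linear maps V → W (i.e., η is a natural transformation of functors Sym^2 → Λ^2 on the category of finite-dimensional k-vector spaces). If char k = 2, this space is one-dimensional, spanned by the transformation sending the class of v·w to v∧w; if char k ≠ 2, this space is zero. -/

import Mathlib

/-! A natural `η` is determined by its value on `e₀ e₁ ∈ Sym² k²`, which lies in the line
`⋀² k² = k ∙ (e₀ ∧ e₁)`; pushing forward along `k² → V, eᵢ ↦ vᵢ` gives `η (v₀ v₁) = c • v₀ ∧ v₁`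
for a single scalar `c`. As `v₀ v₁ = v₁ v₀` but `v₀ ∧ v₁ = -(v₁ ∧ v₀)`, this forces `2 c = 0`.
So `c = 0` unless `char k = 2`, and in characteristic `2` the alternating map `∧` is symmetric,
hence descends to `Sym²`. -/

open PiTensorProduct
open scoped TensorProduct

/-- Relations defining the symmetric power. -/
noncomputable def SymPow.rel (R : Type*) [CommRing R] (M : Type*) [AddCommGroup M]
    [Module R M] (n : ℕ) : Submodule R (⨂[R] (_ : Fin n), M) :=
  Submodule.span R {x | ∃ (σ : Equiv.Perm (Fin n)) (v : Fin n → M),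
    x = tprod R v - PiTensorProduct.reindex R (fun _ => M) σ (tprod R v)}

/-- The `n`-th symmetric power of an `R`-module `M`. -/
noncomputable abbrev SymPow (R : Type*) [CommRing R] (M : Type*) [AddCommGroup M]
    [Module R M] (n : ℕ) :=
  (⨂[R] (_ : Fin n), M) ⧸ SymPow.rel R M n

/-- The class of the product `v 0 ⋯ v (n-1)` in `Sym^n(M)`. -/
noncomputable def SymPow.mk (R : Type*) [CommRing R] (M : Type*) [AddCommGroup M]
    [Module R M] (n : ℕ) (v : Fin n → M) : SymPow R M n :=
  Submodule.Quotient.mk (tprod R v)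

/-- A family of linear maps `Sym²(V) → Λ²(V)`, one for each finite-dimensional
`k`-vector space. -/
abbrev SymSqToExtSqFamily (k : Type) [Field k] : Type 1 :=
  ∀ (V : Type) [AddCommGroup V] [Module k V] [FiniteDimensional k V],
    SymPow k V 2 →ₗ[k] ⋀[k]^2 V

/-- Naturality of such a family with respect to all `k`-linear maps. -/
def IsNatSymSqToExtSq (k : Type) [Field k] (η : SymSqToExtSqFamily k) : Prop :=
  ∀ (V W : Type) [AddCommGroup V] [Module k V] [FiniteDimensional k V]
    [AddCommGroup W] [Module k W] [FiniteDimensional k W]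
    (f : V →ₗ[k] W) (v : Fin 2 → V),
    (↑(η W (SymPow.mk k W 2 (f ∘ v))) : ExteriorAlgebra k W) =
      ExteriorAlgebra.map f ↑(η V (SymPow.mk k V 2 v))

namespace SymPow

variable {R : Type*} [CommRing R] {M : Type*} [AddCommGroup M] [Module R M] {n : ℕ}
  {N : Type*} [AddCommGroup N] [Module R N]

theorem mk_comp_perm (v : Fin n → M) (σ : Equiv.Perm (Fin n)) :
    mk R M n (v ∘ σ) = mk R M n v := by
  rw [mk, mk, Submodule.Quotient.eq, ← neg_mem_iff, neg_sub]
  refine Submodule.subset_span ⟨σ.symm, v, ?_⟩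
  rw [reindex_tprod]
  rfl

theorem hom_ext {f g : SymPow R M n →ₗ[R] N}
    (h : ∀ v : Fin n → M, f (mk R M n v) = g (mk R M n v)) : f = g :=
  Submodule.linearMap_qext _ (PiTensorProduct.ext (MultilinearMap.ext h))

noncomputable def lift (f : MultilinearMap R (fun _ : Fin n => M) N)
    (hf : ∀ (v : Fin n → M) (σ : Equiv.Perm (Fin n)), f (v ∘ σ) = f v) :
    SymPow R M n →ₗ[R] N :=
  (rel R M n).liftQ (PiTensorProduct.lift f) <| by
    rw [rel, Submodule.span_le]
    rintro _ ⟨σ, v, rfl⟩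
    rw [SetLike.mem_coe, LinearMap.mem_ker, map_sub, reindex_tprod, lift.tprod, lift.tprod]
    exact sub_eq_zero.2 (hf v σ.symm).symm

theorem lift_mk (f : MultilinearMap R (fun _ : Fin n => M) N)
    (hf : ∀ (v : Fin n → M) (σ : Equiv.Perm (Fin n)), f (v ∘ σ) = f v) (v : Fin n → M) :
    lift f hf (mk R M n v) = f v :=
  PiTensorProduct.lift.tprod v

end SymPow

theorem AlternatingMap.map_perm_of_charTwo {R M N ι : Type*} [Ring R] [CharP R 2]
    [AddCommGroup M] [Module R M] [AddCommGroup N] [Module R N] [Fintype ι] [DecidableEq ι]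
    (f : M [⋀^ι]→ₗ[R] N) (v : ι → M) (σ : Equiv.Perm ι) : f (v ∘ σ) = f v := by
  rw [f.map_perm]
  rcases Int.units_eq_one_or (Equiv.Perm.sign σ) with h | h
  · rw [h, one_smul]
  · rw [h, Units.neg_smul, one_smul, ← neg_one_smul R, CharTwo.neg_eq, one_smul]

theorem AlternatingMap.map_eq_det_smul_map_basis {R M N ι : Type*} [CommRing R]
    [AddCommGroup M] [Module R M] [AddCommGroup N] [Module R N] [Fintype ι] [DecidableEq ι]
    (b : Module.Basis ι R M) (f : M [⋀^ι]→ₗ[R] N) (v : ι → M) : f v = b.det v • f b := by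
  suffices f = b.det.smulRight (f b) from congrArg (· v) this
  refine b.ext_alternating fun i hi => ?_
  let σ : Equiv.Perm ι := Equiv.ofBijective i (Finite.injective_iff_bijective.1 hi)
  change f (b ∘ σ) = b.det (b ∘ σ) • f b
  simp [AlternatingMap.map_perm, Module.Basis.det_self]

namespace exteriorPower

variable {R M : Type*} [CommRing R] [AddCommGroup M] [Module R M] {n : ℕ}

theorem exists_eq_smul_ιMulti_basis (b : Module.Basis (Fin n) R M) (x : ⋀[R]^n M) :
    ∃ c : R, x = c • ιMulti R n b := by
  have hx : x ∈ R ∙ ιMulti R n b := by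
    refine Submodule.span_le.2 ?_ ((ιMulti_span R n M).ge Submodule.mem_top)
    rintro _ ⟨v, rfl⟩
    rw [SetLike.mem_coe, (ιMulti R n).map_eq_det_smul_map_basis b v]
    exact Submodule.smul_mem _ _ (Submodule.mem_span_singleton_self _)
  obtain ⟨c, hc⟩ := Submodule.mem_span_singleton.1 hx
  exact ⟨c, hc.symm⟩

theorem ιMulti_basis_ne_zero [Nontrivial R] (b : Module.Basis (Fin n) R M) :
    ιMulti R n b ≠ 0 := by
  intro h
  have := alternatingMapLinearEquiv_apply_ιMulti b.det b
  rw [h, map_zero, b.det_self] at this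
  exact one_ne_zero this.symm

end exteriorPower

section

variable {k : Type} [Field k]

open exteriorPower

theorem IsNatSymSqToExtSq.exists_eq_smul_ιMulti {η : SymSqToExtSqFamily k}
    (hη : IsNatSymSqToExtSq k η) :
    ∃ c : k, ∀ (V : Type) [AddCommGroup V] [Module k V] [FiniteDimensional k V]
      (v : Fin 2 → V), η V (SymPow.mk k V 2 v) = c • ιMulti k 2 v := by
  let b := Pi.basisFun k (Fin 2)
  obtain ⟨c, hc⟩ := exists_eq_smul_ιMulti_basis b (η (Fin 2 → k) (SymPow.mk k _ 2 b))
  refine ⟨c, fun V _ _ _ v => Subtype.ext ?_⟩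
  have hv : b.constr k v ∘ b = v := funext (b.constr_basis k v)
  have := hη _ V (b.constr k v) b
  rw [hv, hc] at this
  rw [this, Submodule.coe_smul, Submodule.coe_smul, map_smul, ιMulti_apply_coe, ιMulti_apply_coe,
    ExteriorAlgebra.map_apply_ιMulti, hv]

theorem two_mul_eq_zero_of_forall_eq_smul_ιMulti {V : Type*} [AddCommGroup V] [Module k V]
    (b : Module.Basis (Fin 2) k V) (L : SymPow k V 2 →ₗ[k] ⋀[k]^2 V) (c : k)
    (hL : ∀ v, L (SymPow.mk k V 2 v) = c • ιMulti k 2 v) : 2 * c = 0 := by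
  have hswap : ιMulti k 2 (b ∘ Equiv.swap 0 1) = -ιMulti k 2 b :=
    (ιMulti k 2).map_swap _ (by decide)
  have hsymm : c • ιMulti k 2 (b ∘ Equiv.swap 0 1) = c • ιMulti k 2 b := by
    rw [← hL, ← hL, SymPow.mk_comp_perm]
  rw [hswap, smul_neg, neg_eq_iff_add_eq_zero, ← add_smul, ← two_mul] at hsymm
  exact (smul_eq_zero.1 hsymm).resolve_right (ιMulti_basis_ne_zero b)

noncomputable def symSqToExtSq [CharP k 2] : SymSqToExtSqFamily k := fun _ _ _ _ =>
  SymPow.lift (ιMulti k 2).toMultilinearMap (ιMulti k 2).map_perm_of_charTwo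

theorem symSqToExtSq_mk [CharP k 2] {V : Type} [AddCommGroup V] [Module k V]
    [FiniteDimensional k V] (v : Fin 2 → V) :
    symSqToExtSq V (SymPow.mk k V 2 v) = ιMulti k 2 v :=
  SymPow.lift_mk _ _ v

theorem isNatSymSqToExtSq_symSqToExtSq [CharP k 2] :
    IsNatSymSqToExtSq k (symSqToExtSq (k := k)) := by
  intro V W _ _ _ _ _ _ f v
  rw [symSqToExtSq_mk, symSqToExtSq_mk, ιMulti_apply_coe, ιMulti_apply_coe,
    ExteriorAlgebra.map_apply_ιMulti]

end

theorem natTrans_symSq_to_extSq_general (k : Type) [Field k] :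
    ((ringChar k = 2) →
      ∃ η₀ : SymSqToExtSqFamily k, IsNatSymSqToExtSq k η₀ ∧
        (∀ (V : Type) [AddCommGroup V] [Module k V] [FiniteDimensional k V]
          (v : Fin 2 → V),
          (↑(η₀ V (SymPow.mk k V 2 v)) : ExteriorAlgebra k V) =
            ExteriorAlgebra.ιMulti k 2 v) ∧
        ∀ η : SymSqToExtSqFamily k, IsNatSymSqToExtSq k η →
          ∃! c : k, ∀ (V : Type) [AddCommGroup V] [Module k V] [FiniteDimensional k V],
            η V = c • η₀ V) ∧
    ((ringChar k ≠ 2) →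
      ∀ η : SymSqToExtSqFamily k, IsNatSymSqToExtSq k η →
        ∀ (V : Type) [AddCommGroup V] [Module k V] [FiniteDimensional k V], η V = 0) := by
  let b := Pi.basisFun k (Fin 2)
  refine ⟨fun hchar => ?_, fun hchar η hη V _ _ _ => ?_⟩
  · have : CharP k 2 := ringChar.of_eq hchar
    refine ⟨symSqToExtSq, isNatSymSqToExtSq_symSqToExtSq,
      fun _ _ _ _ v => congrArg Subtype.val (symSqToExtSq_mk v), fun η hη => ?_⟩
    obtain ⟨c, hc⟩ := hη.exists_eq_smul_ιMulti
    refine ⟨c, fun V _ _ _ => SymPow.hom_ext fun v => by simp [hc, symSqToExtSq_mk],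
      fun c' hc' => ?_⟩
    have h := LinearMap.congr_fun (hc' _) (SymPow.mk k _ 2 b)
    rw [hc, LinearMap.smul_apply, symSqToExtSq_mk] at h
    exact smul_left_injective k (exteriorPower.ιMulti_basis_ne_zero b) h.symm
  · obtain ⟨c, hc⟩ := hη.exists_eq_smul_ιMulti
    have hc_zero : c = 0 := (mul_eq_zero.1 (two_mul_eq_zero_of_forall_eq_smul_ιMulti b _ c (hc _))
      ).resolve_left (Ring.two_ne_zero hchar)
    exact SymPow.hom_ext fun v => by simp [hc, hc_zero]

/-- Let `k` be a field and `n ≥ 2`.  The space of natural transformations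
`Sym² → Λ²` on finite-dimensional `k`-vector spaces is one-dimensional if `char k = 2`,
spanned by the transformation sending the class of `v·w` to `v ∧ w`, and it is zero if
`char k ≠ 2`. -/
theorem natTrans_symSq_to_extSq (k : Type) [Field k] (n : ℕ) (hn : 2 ≤ n) :
    ((ringChar k = 2) →
      ∃ η₀ : SymSqToExtSqFamily k, IsNatSymSqToExtSq k η₀ ∧
        (∀ (V : Type) [AddCommGroup V] [Module k V] [FiniteDimensional k V]
          (v : Fin 2 → V),
          (↑(η₀ V (SymPow.mk k V 2 v)) : ExteriorAlgebra k V) =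
            ExteriorAlgebra.ιMulti k 2 v) ∧
        ∀ η : SymSqToExtSqFamily k, IsNatSymSqToExtSq k η →
          ∃! c : k, ∀ (V : Type) [AddCommGroup V] [Module k V] [FiniteDimensional k V],
            η V = c • η₀ V) ∧
    ((ringChar k ≠ 2) →
      ∀ η : SymSqToExtSqFamily k, IsNatSymSqToExtSq k η →
        ∀ (V : Type) [AddCommGroup V] [Module k V] [FiniteDimensional k V], η V = 0) :=
  natTrans_symSq_to_extSq_general k
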